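/- arXiv:2601.09589 — 2 statements merged into one kernel-verified Lean document; each statement's English description precedes it below -/
import Mathlib

section
/- Let σ = Cone(v_1,…,v_{d+1}) be a simplicial cone in ℝ^{d+1} and L : ℝ^{d+1} → ℝ^d the projection forgetting the last coordinate. Suppose L v_{d+1} = Σ_{i=1}^d λ_i L v_i with λ_i ≥ 0 for i < d and λ_d < 0. Then Cone(Lv_1,…,Lv_{d−1},Lv_d) ∪ Cone(Lv_1,…,Lv_{d−1},Lv_{d+1}) contains the image under L of every cone of the form Cone(Lv_j : j ≠ k) for k ∈ {1,…,d+1}; in particular the union over k of the cones Cone(Lv_j : j ≠ k, 1 ≤ j ≤ d+1) with k ranging over one index set equals the union with k ranging over the complementary index set. -/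
/-- The cone of nonnegative linear combinations of a finite family of vectors. -/
def coneOf {ι : Type*} [Fintype ι] {V : Type*} [AddCommMonoid V] [Module ℝ V]
    (w : ι → V) : Set V :=
  {x | ∃ μ : ι → ℝ, (∀ i, 0 ≤ μ i) ∧ x = ∑ i, μ i • w i}

/-!
Writing the relation as `∑ c j • w j = 0` with `c = (lam, -1)`, the only coefficients that can be
negative are those of `w (Fin.last d)` and `w (d - 1)`. Given `x = ∑ μ j • w j` with `μ ≥ 0`,
replace `μ` by `μ + t c` with the largest `t ≥ 0` keeping every coefficient nonnegative; some
negative coefficient of `c` then kills its generator, so `x` lies in one of the two cones.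
-/

section coneOf

variable {ι V : Type*} [Fintype ι] [AddCommMonoid V] [Module ℝ V] (w : ι → V)

theorem mem_coneOf_subtype_iff (P : ι → Prop) [DecidablePred P] {x : V} :
    x ∈ coneOf (fun j : {j // P j} => w j) ↔
      ∃ μ : ι → ℝ, (∀ i, 0 ≤ μ i) ∧ (∀ i, ¬P i → μ i = 0) ∧ x = ∑ i, μ i • w i := by
  constructor
  · rintro ⟨ν, hν, rfl⟩
    refine ⟨fun i => if h : P i then ν ⟨i, h⟩ else 0, fun i => ?_, fun i hi => dif_neg hi, ?_⟩
    · dsimp only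
      split_ifs
      exacts [hν _, le_rfl]
    · conv_rhs => rw [← Fintype.sum_subtype_add_sum_subtype P]
      rw [Finset.sum_eq_zero (s := (Finset.univ : Finset {i // ¬P i})) fun i _ => by
        simp only [dif_neg i.2, zero_smul], add_zero]
      exact Finset.sum_congr rfl fun i _ => by simp only [dif_pos i.2]
  · rintro ⟨μ, hμ, hzero, rfl⟩
    refine ⟨fun j => μ j, fun j => hμ j, ?_⟩
    conv_lhs => rw [← Fintype.sum_subtype_add_sum_subtype P]
    rw [Finset.sum_eq_zero (s := (Finset.univ : Finset {i // ¬P i})) fun i _ => by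
      rw [hzero i i.2, zero_smul], add_zero]

variable {w}

theorem coneOf_subtype_subset (P : ι → Prop) [DecidablePred P] :
    coneOf (fun j : {j // P j} => w j) ⊆ coneOf w := fun _ hx => by
  obtain ⟨μ, hμ, -, rfl⟩ := (mem_coneOf_subtype_iff _ P).1 hx
  exact ⟨μ, hμ, rfl⟩

theorem coneOf_subtype_mono {P Q : ι → Prop} [DecidablePred P] [DecidablePred Q]
    (hPQ : ∀ i, P i → Q i) :
    coneOf (fun j : {j // P j} => w j) ⊆ coneOf (fun j : {j // Q j} => w j) := fun _ hx => by
  obtain ⟨μ, hμ, hzero, rfl⟩ := (mem_coneOf_subtype_iff _ P).1 hx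
  exact (mem_coneOf_subtype_iff _ Q).2 ⟨μ, hμ, fun i hQ => hzero i (mt (hPQ i) hQ), rfl⟩

theorem exists_mem_coneOf_ne_of_sum_smul_eq_zero [DecidableEq ι] {c : ι → ℝ}
    (hc : ∑ i, c i • w i = 0) (hneg : ∃ i, c i < 0) {x : V} (hx : x ∈ coneOf w) :
    ∃ n, c n < 0 ∧ x ∈ coneOf (fun j : {j // j ≠ n} => w j) := by
  obtain ⟨μ, hμ, rfl⟩ := hx
  obtain ⟨n, hn, hmin⟩ := Finset.exists_min_image {i | c i < 0} (fun i => μ i / -c i)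
    (by simpa [Finset.Nonempty] using hneg)
  simp only [Finset.mem_filter, Finset.mem_univ, true_and] at hn hmin
  set t := μ n / -c n
  have ht : 0 ≤ t := div_nonneg (hμ n) (by linarith)
  refine ⟨n, hn, (mem_coneOf_subtype_iff _ _).2 ⟨fun i => μ i + t * c i, fun i => ?_, ?_, ?_⟩⟩
  · rcases le_or_gt 0 (c i) with hci | hci
    · exact add_nonneg (hμ i) (mul_nonneg ht hci)
    · have := (le_div_iff₀ (neg_pos.2 hci)).1 (hmin i hci)
      linarith
  · intro i hi
    dsimp only
    rw [not_not.1 hi, div_mul_eq_mul_div, div_neg, mul_div_cancel_right₀ _ hn.ne, add_neg_cancel]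
  · simp only [add_smul, Finset.sum_add_distrib, mul_smul, ← Finset.smul_sum, hc, smul_zero,
      add_zero]

end coneOf

/-- under the relation `w_last = Σ λ_i w_i` with `λ_i ≥ 0` for `i < d-1`
and `λ_{d-1} < 0`, every cone spanned by all the `w_j` except one is contained in the
union of the cone omitting the last vector and the cone omitting the `(d-1)`-st vector. -/
theorem stmt8 (d : ℕ) (w : Fin (d + 1) → (Fin d → ℝ)) (lam : Fin d → ℝ)
    (hrel : w (Fin.last d) = ∑ i : Fin d, lam i • w i.castSucc)
    (hnn : ∀ i : Fin d, (i : ℕ) < d - 1 → 0 ≤ lam i) :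
    ∀ k : Fin (d + 1),
      coneOf (fun j : {j : Fin (d + 1) // j ≠ k} => w j) ⊆
        coneOf (fun j : {j : Fin (d + 1) // j ≠ Fin.last d} => w j) ∪
          coneOf (fun j : {j : Fin (d + 1) // (j : ℕ) ≠ d - 1} => w j) := by
  intro k x hx
  set c : Fin (d + 1) → ℝ := Fin.snoc lam (-1)
  have hc : ∑ i, c i • w i = 0 := by
    simp [c, Fin.sum_univ_castSucc, hrel]
  obtain ⟨n, hn, hxn⟩ := exists_mem_coneOf_ne_of_sum_smul_eq_zero hc
    ⟨Fin.last d, by simp [c]⟩ (coneOf_subtype_subset _ hx)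
  induction n using Fin.lastCases with
  | last => exact Or.inl hxn
  | cast i =>
    have hi : (i : ℕ) = d - 1 := by
      by_contra hi
      have := hnn i (by omega)
      simp only [c, Fin.snoc_castSucc] at hn
      linarith
    exact Or.inr (coneOf_subtype_mono (fun j hj hjd => hj (Fin.ext (by simp [hi, hjd]))) hxn)
end

section
/- Let Δ be a finite set of strongly convex simplicial cones in ℝ^d closed under intersections and faces, whose cone generators are rational. Then for any ε > 0 and any perturbation of the generators within ε small enough, the perturbed cones form a set with the same combinatorial type (same poset of cones under inclusion); in particular the set of generator configurations realizing a fixed simplicial fan combinatorics D is open in (ℝ^d)^m. -/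
/-!
Two simplicial cones `cone s` and `cone t` meet exactly in their common face `cone (s ∩ t)` iff some
linear functional vanishes on the generators indexed by `s ∩ t`, is positive on those indexed by
`s \ t` and negative on those indexed by `t \ s`. For the forward direction, no nonzero nonnegative
combination of the latter two families, with signs, lies in the span of the first (otherwise moving
terms across produces a point of `cone s ∩ cone t` outside `cone (s ∩ t)`), and Hahn–Banach
separates. Such a functional survives small perturbations of the generators: correct it by Cramer's
rule against a family dual to the generators of `s ∩ t`, which is polynomial in the generators.
Linear independence is open as well, so the whole combinatorial type is locally constant.
-/

open Finset Filter Topology Matrix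

variable {ι V : Type*} [DecidableEq ι]

lemma Finset.sum_ite_mem_eq_add {M : Type*} [AddCommMonoid M] (s t : Finset ι) (f f' : ι → M) :
    ∑ i ∈ s, (if i ∈ t then f i else f' i) = ∑ i ∈ s ∩ t, f i + ∑ i ∈ s \ t, f' i := by
  rw [sum_ite, filter_mem_eq_inter, filter_notMem_eq_sdiff]

section Cones

variable [AddCommGroup V] [Module ℝ V] {g : ι → V} {s t : Finset ι}

lemma mem_coneOf_iff {x : V} :
    x ∈ coneOf (fun i : s => g i) ↔ ∃ μ : ι → ℝ, (∀ i ∈ s, 0 ≤ μ i) ∧ x = ∑ i ∈ s, μ i • g i := by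
  constructor
  · rintro ⟨μ, hμ, rfl⟩
    refine ⟨fun i => if h : i ∈ s then μ ⟨i, h⟩ else 0, fun i hi => by simp [hi, hμ], ?_⟩
    rw [← s.sum_coe_sort]
    simp
  · rintro ⟨μ, hμ, rfl⟩
    exact ⟨fun i => μ i, fun i => hμ i i.2, (s.sum_coe_sort _).symm⟩

lemma coneOf_mono (h : s ⊆ t) : coneOf (fun i : s => g i) ⊆ coneOf (fun i : t => g i) := by
  intro x hx
  obtain ⟨μ, hμ, rfl⟩ := mem_coneOf_iff.1 hx
  refine mem_coneOf_iff.2 ⟨fun i => if i ∈ s then μ i else 0, fun i _ => ?_, ?_⟩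
  · dsimp only
    split_ifs with hi
    exacts [hμ i hi, le_rfl]
  · simp_rw [ite_smul, zero_smul, sum_ite_mem, inter_eq_right.2 h]

lemma sum_sdiff_add_sum_inter_mem_coneOf {a c : ι → ℝ} (ha : ∀ i ∈ s \ t, 0 ≤ a i)
    (hc : ∀ i ∈ s ∩ t, 0 ≤ c i) :
    ∑ i ∈ s \ t, a i • g i + ∑ i ∈ s ∩ t, c i • g i ∈ coneOf (fun i : s => g i) := by
  refine mem_coneOf_iff.2 ⟨fun i => if i ∈ t then c i else a i, fun i hi => ?_, ?_⟩
  · dsimp only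
    split_ifs with hit
    exacts [hc i (mem_inter.2 ⟨hi, hit⟩), ha i (mem_sdiff.2 ⟨hi, hit⟩)]
  · simp_rw [ite_smul, sum_ite_mem_eq_add, add_comm]

lemma coeff_eq_zero_of_mem_coneOf_inter (hs : LinearIndependent ℝ (fun i : s => g i))
    {μ : ι → ℝ} (hμ : ∑ i ∈ s, μ i • g i ∈ coneOf (fun i : ↥(s ∩ t) => g i)) :
    ∀ i ∈ s \ t, μ i = 0 := by
  obtain ⟨ν, -, hν⟩ := mem_coneOf_iff.1 hμ
  have hcoeff := linearIndepOn_finset_iffₛ.1 hs μ (fun i => if i ∈ t then ν i else 0) (by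
    simp_rw [hν, ite_smul, zero_smul, sum_ite_mem])
  intro i hi
  obtain ⟨his, hit⟩ := Finset.mem_sdiff.1 hi
  simpa [hit] using hcoeff i his

lemma eq_zero_of_sum_sdiff_sub_sum_sdiff_eq (hs : LinearIndependent ℝ (fun i : s => g i))
    (hst : coneOf (fun i : ↥(s ∩ t) => g i) = coneOf (fun i : s => g i) ∩ coneOf (fun i : t => g i))
    {a b c : ι → ℝ} (ha : ∀ i ∈ s \ t, 0 ≤ a i) (hb : ∀ j ∈ t \ s, 0 ≤ b j)
    (h : ∑ i ∈ s \ t, a i • g i - ∑ j ∈ t \ s, b j • g j = ∑ k ∈ s ∩ t, c k • g k) :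
    ∀ i ∈ s \ t, a i = 0 := by
  have hc : ∑ k ∈ s ∩ t, c k • g k =
      ∑ k ∈ s ∩ t, (c k)⁺ • g k - ∑ k ∈ s ∩ t, (c k)⁻ • g k := by
    simp_rw [← sum_sub_distrib, ← sub_smul, posPart_sub_negPart]
  -- moving the negative part of `c` to the left gives a point of `cone s ∩ cone t`
  have hy : ∑ i ∈ s \ t, a i • g i + ∑ k ∈ s ∩ t, (c k)⁻ • g k =
      ∑ j ∈ t \ s, b j • g j + ∑ k ∈ t ∩ s, (c k)⁺ • g k := by
    rw [inter_comm t s]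
    linear_combination (norm := module) h.trans hc
  have hmem : ∑ i ∈ s, (if i ∈ t then (c i)⁻ else a i) • g i ∈
      coneOf (fun i : ↥(s ∩ t) => g i) := by
    simp_rw [ite_smul, sum_ite_mem_eq_add, add_comm, hst]
    refine ⟨sum_sdiff_add_sum_inter_mem_coneOf ha fun k _ => negPart_nonneg _, ?_⟩
    rw [hy]
    exact sum_sdiff_add_sum_inter_mem_coneOf hb fun k _ => posPart_nonneg _
  intro i hi
  simpa [(Finset.mem_sdiff.1 hi).2] using coeff_eq_zero_of_mem_coneOf_inter hs hmem i hi

def IsSeparatingFunctional (φ : Module.Dual ℝ V) (g : ι → V) (K P N : Finset ι) : Prop :=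
  (∀ k ∈ K, φ (g k) = 0) ∧ (∀ i ∈ P, 0 < φ (g i)) ∧ ∀ j ∈ N, φ (g j) < 0

lemma coneOf_inter_eq_of_isSeparatingFunctional {φ : Module.Dual ℝ V}
    (hφ : IsSeparatingFunctional φ g (s ∩ t) (s \ t) (t \ s)) :
    coneOf (fun i : ↥(s ∩ t) => g i) = coneOf (fun i : s => g i) ∩ coneOf (fun i : t => g i) := by
  obtain ⟨h0, hpos, hneg⟩ := hφ
  refine (Set.subset_inter (coneOf_mono inter_subset_left)
    (coneOf_mono inter_subset_right)).antisymm ?_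
  rintro x ⟨hxs, hxt⟩
  obtain ⟨μ, hμ, rfl⟩ := mem_coneOf_iff.1 hxs
  obtain ⟨ν, hν, hx⟩ := mem_coneOf_iff.1 hxt
  have hs : ∀ i ∈ s, 0 ≤ μ i * φ (g i) := fun i hi => mul_nonneg (hμ i hi) <| by
    by_cases hit : i ∈ t
    · exact (h0 i (mem_inter.2 ⟨hi, hit⟩)).ge
    · exact (hpos i (Finset.mem_sdiff.2 ⟨hi, hit⟩)).le
  have ht : ∀ j ∈ t, ν j * φ (g j) ≤ 0 := fun j hj =>
    mul_nonpos_of_nonneg_of_nonpos (hν j hj) <| by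
      by_cases hjs : j ∈ s
      · exact (h0 j (mem_inter.2 ⟨hjs, hj⟩)).le
      · exact (hneg j (Finset.mem_sdiff.2 ⟨hj, hjs⟩)).le
  have hφx : ∑ i ∈ s, μ i * φ (g i) = 0 := by
    refine le_antisymm ?_ (sum_nonneg hs)
    have := congrArg φ hx
    simp only [map_sum, map_smul, smul_eq_mul] at this
    exact this ▸ sum_nonpos ht
  have hμ0 : ∀ i ∈ s \ t, μ i = 0 := fun i hi =>
    (mul_eq_zero.1 ((sum_eq_zero_iff_of_nonneg hs).1 hφx i (Finset.mem_sdiff.1 hi).1)).resolve_right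
      (hpos i hi).ne'
  refine mem_coneOf_iff.2 ⟨μ, fun i hi => hμ i (mem_inter.1 hi).1,
    (sum_subset inter_subset_left fun i hi hit => ?_).symm⟩
  rw [hμ0 i (Finset.mem_sdiff.2 ⟨hi, fun h => hit (mem_inter.2 ⟨hi, h⟩)⟩), zero_smul]

end Cones

/-- Gordan's alternative relative to a closed subspace. -/
lemma exists_clm_eq_zero_pos_of_nonneg_comb {κ E : Type*} [NormedAddCommGroup E] [NormedSpace ℝ E]
    (W : Submodule ℝ E) (hW : IsClosed (W : Set E)) (v : κ → E) (S : Finset κ)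
    (h : ∀ w : κ → ℝ, (∀ i ∈ S, 0 ≤ w i) → ∑ i ∈ S, w i • v i ∈ W → ∀ i ∈ S, w i = 0) :
    ∃ f : E →L[ℝ] ℝ, (∀ x ∈ W, f x = 0) ∧ ∀ i ∈ S, 0 < f (v i) := by
  classical
  have hC : convexHull ℝ (v '' S) ⊆
      {x | ∃ w : κ → ℝ, (∀ i ∈ S, 0 ≤ w i) ∧ ∑ i ∈ S, w i = 1 ∧ ∑ i ∈ S, w i • v i = x} := by
    refine convexHull_min ?_ ?_
    · rintro _ ⟨i, hi : i ∈ S, rfl⟩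
      refine ⟨Pi.single i 1, fun j _ => ?_, by simp [sum_pi_single', hi], ?_⟩
      · rcases eq_or_ne j i with rfl | hji <;> simp [*]
      · simp [Pi.single_apply, hi]
    · rintro _ ⟨w, hw0, hw1, rfl⟩ _ ⟨w', hw0', hw1', rfl⟩ a b ha hb hab
      refine ⟨a • w + b • w', fun i hi => ?_, ?_, ?_⟩
      · simp only [Pi.add_apply, Pi.smul_apply, smul_eq_mul]
        exact add_nonneg (mul_nonneg ha (hw0 i hi)) (mul_nonneg hb (hw0' i hi))
      · simp [sum_add_distrib, ← mul_sum, hw1, hw1', hab]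
      · simp [add_smul, sum_add_distrib, smul_sum, mul_smul]
  have hdisj : Disjoint (convexHull ℝ (v '' S)) (W : Set E) := by
    refine Set.disjoint_left.2 fun x hxC hxW => ?_
    obtain ⟨w, hw0, hw1, rfl⟩ := hC hxC
    simp [sum_eq_zero (h w hw0 hxW)] at hw1
  obtain ⟨f, u, u', hfu, huu', hu'f⟩ := geometric_hahn_banach_compact_closed
    (convex_convexHull ℝ _) ((S.finite_toSet.image v).isCompact_convexHull ℝ) W.convex hW hdisj
  have hfW : ∀ x ∈ W, f x = 0 := by
    intro x hx
    by_contra hfx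
    have := hu'f _ (W.smul_mem ((u' - 1) / f x) hx)
    rw [map_smul, smul_eq_mul, div_mul_cancel₀ _ hfx] at this
    linarith
  have hu' : u' < 0 := by simpa [hfW 0 W.zero_mem] using hu'f 0 W.zero_mem
  refine ⟨-f, fun x hx => by simp [hfW x hx], fun i hi => ?_⟩
  have := hfu (v i) (subset_convexHull ℝ _ ⟨i, hi, rfl⟩)
  show 0 < -f (v i)
  linarith

section Cramer

variable {κ : Type*} [Fintype κ] [DecidableEq κ] [AddCommGroup V] [Module ℝ V]

def pairingMatrix (ψ : κ → Module.Dual ℝ V) (w : κ → V) : Matrix κ κ ℝ :=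
  Matrix.of fun k l => ψ l (w k)

/-- With `M = pairingMatrix ψ w`, this is `det M • φ ∘ (1 - π)`, where `π` is the projection onto
the span of `w` along the common kernel of the `ψ l`; writing `M⁻¹` as `adjugate M / det M` makes
it polynomial in `w`, with no invertibility condition. -/
def cramerCorrection (ψ : κ → Module.Dual ℝ V) (φ : Module.Dual ℝ V) (w : κ → V) :
    Module.Dual ℝ V :=
  (pairingMatrix ψ w).det • φ - ∑ l, ((pairingMatrix ψ w).adjugate *ᵥ fun k => φ (w k)) l • ψ l

lemma cramerCorrection_apply_self (ψ : κ → Module.Dual ℝ V) (φ : Module.Dual ℝ V) (w : κ → V)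
    (k : κ) : cramerCorrection ψ φ w (w k) = 0 := by
  have hM := congrFun (mulVec_mulVec (fun k => φ (w k)) (pairingMatrix ψ w)
    (pairingMatrix ψ w).adjugate) k
  rw [mul_adjugate, smul_mulVec, one_mulVec, Pi.smul_apply, smul_eq_mul] at hM
  rw [cramerCorrection, LinearMap.sub_apply, LinearMap.smul_apply, LinearMap.sum_apply]
  simp only [LinearMap.smul_apply, smul_eq_mul]
  rw [sub_eq_zero, ← hM]
  exact sum_congr rfl fun l _ => mul_comm _ _

lemma cramerCorrection_eq_self {ψ : κ → Module.Dual ℝ V} {φ : Module.Dual ℝ V} {w : κ → V}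
    (hψ : pairingMatrix ψ w = 1) (hφ : ∀ k, φ (w k) = 0) :
    cramerCorrection ψ φ w = φ := by
  simp [cramerCorrection, hψ, hφ]

lemma LinearIndependent.exists_pairingMatrix_eq_one {v : κ → V} (hv : LinearIndependent ℝ v) :
    ∃ ψ : κ → Module.Dual ℝ V, pairingMatrix ψ v = 1 := by
  obtain ⟨r, hr⟩ := (Fintype.linearCombination ℝ v).exists_leftInverse_of_injective
    (LinearMap.ker_eq_bot.2 hv.fintypeLinearCombination_injective)
  refine ⟨fun l => (LinearMap.proj l).comp r, ?_⟩
  ext k l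
  have hrv : r (v k) = Pi.single k 1 := by simpa using LinearMap.congr_fun hr (Pi.single k 1)
  simp [pairingMatrix, hrv, Matrix.one_apply, Pi.single_apply, eq_comm]

end Cramer

section Normed

variable [NormedAddCommGroup V] [NormedSpace ℝ V]

theorem exists_isSeparatingFunctional_of_coneOf_inter_eq {g : ι → V} {s t : Finset ι}
    (hs : LinearIndependent ℝ (fun i : s => g i)) (ht : LinearIndependent ℝ (fun i : t => g i))
    (hst : coneOf (fun i : ↥(s ∩ t) => g i) =
      coneOf (fun i : s => g i) ∩ coneOf (fun i : t => g i)) :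
    ∃ φ : Module.Dual ℝ V, IsSeparatingFunctional φ g (s ∩ t) (s \ t) (t \ s) := by
  set v : ι → V := fun i => if i ∈ s then g i else -g i
  set W := Submodule.span ℝ (g '' ↑(s ∩ t))
  have hW : IsClosed (W : Set V) := by
    have := FiniteDimensional.span_of_finite ℝ ((s ∩ t).finite_toSet.image g)
    exact W.closed_of_finiteDimensional
  have hcomb : ∀ w : ι → ℝ, (∀ i ∈ s \ t ∪ t \ s, 0 ≤ w i) →
      ∑ i ∈ s \ t ∪ t \ s, w i • v i ∈ W → ∀ i ∈ s \ t ∪ t \ s, w i = 0 := by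
    intro w hw hwW
    obtain ⟨c, hc⟩ := (Submodule.mem_span_image_finset_iff_exists_fun' ℝ).1 hwW
    have hsum : ∑ i ∈ s \ t, w i • g i - ∑ j ∈ t \ s, w j • g j = ∑ k ∈ s ∩ t, c k • g k := by
      rw [hc, sum_union disjoint_sdiff_sdiff, sub_eq_add_neg, ← sum_neg_distrib]
      congr 1 <;> refine sum_congr rfl fun i hi => ?_
      · simp [v, (Finset.mem_sdiff.1 hi).1]
      · simp [v, (Finset.mem_sdiff.1 hi).2]
    have hs0 := eq_zero_of_sum_sdiff_sub_sum_sdiff_eq hs hst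
      (fun i hi => hw i (mem_union_left _ hi)) (fun j hj => hw j (mem_union_right _ hj)) hsum
    have ht0 := eq_zero_of_sum_sdiff_sub_sum_sdiff_eq (c := -c) ht
      (by rw [inter_comm, Set.inter_comm, hst]) (fun j hj => hw j (mem_union_right _ hj))
      (fun i hi => hw i (mem_union_left _ hi))
      (by rw [inter_comm]; simp only [Pi.neg_apply, neg_smul, sum_neg_distrib, ← hsum, neg_sub])
    intro i hi
    exact (mem_union.1 hi).elim (hs0 i) (ht0 i)
  obtain ⟨f, hfW, hfv⟩ := exists_clm_eq_zero_pos_of_nonneg_comb W hW v _ hcomb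
  refine ⟨f, fun k hk => hfW _ (Submodule.subset_span ⟨k, hk, rfl⟩), fun i hi => ?_,
    fun j hj => ?_⟩
  · simpa [v, (Finset.mem_sdiff.1 hi).1] using hfv i (mem_union_left _ hi)
  · simpa [v, (Finset.mem_sdiff.1 hj).2] using hfv j (mem_union_right _ hj)

lemma continuous_cramerCorrection_apply [FiniteDimensional ℝ V] {κ : Type*} [Fintype κ]
    [DecidableEq κ] {X : Type*} [TopologicalSpace X] (ψ : κ → Module.Dual ℝ V)
    (φ : Module.Dual ℝ V) {w : X → κ → V} {u : X → V} (hw : Continuous w) (hu : Continuous u) :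
    Continuous fun x => cramerCorrection ψ φ (w x) (u x) := by
  have hψ := fun l => (ψ l).continuous_of_finiteDimensional
  have hφ := φ.continuous_of_finiteDimensional
  have hM : Continuous fun x => pairingMatrix ψ (w x) :=
    continuous_matrix fun k l => (hψ l).comp ((continuous_apply k).comp hw)
  simp only [cramerCorrection, LinearMap.sub_apply, LinearMap.smul_apply, LinearMap.sum_apply,
    smul_eq_mul]
  refine (hM.matrix_det.mul (hφ.comp hu)).sub (continuous_finsetSum _ fun l _ => ?_)
  exact ((continuous_apply l).comp (hM.matrix_adjugate.matrix_mulVec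
    (continuous_pi fun k => hφ.comp ((continuous_apply k).comp hw)))).mul ((hψ l).comp hu)

theorem IsSeparatingFunctional.eventually [FiniteDimensional ℝ V] {g : ι → V}
    {K P N : Finset ι} {φ : Module.Dual ℝ V}
    (hK : LinearIndependent ℝ (fun k : K => g k)) (hφ : IsSeparatingFunctional φ g K P N) :
    ∀ᶠ g' in 𝓝 g, ∃ φ', IsSeparatingFunctional φ' g' K P N := by
  obtain ⟨ψ, hψ⟩ := hK.exists_pairingMatrix_eq_one
  set F : (ι → V) → Module.Dual ℝ V := fun g' => cramerCorrection ψ φ fun k : K => g' k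
  have hF : F g = φ := cramerCorrection_eq_self hψ fun k => hφ.1 k k.2
  have hlim : ∀ i, Tendsto (fun g' => F g' (g' i)) (𝓝 g) (𝓝 (φ (g i))) := fun i =>
    hF ▸ (continuous_cramerCorrection_apply ψ φ (continuous_pi fun k => continuous_apply (k : ι))
      (continuous_apply i)).tendsto g
  have hpos : ∀ᶠ g' in 𝓝 g, ∀ i ∈ P, 0 < F g' (g' i) :=
    (eventually_all_finset P).2 fun i hi => (hlim i).eventually_const_lt (hφ.2.1 i hi)
  have hneg : ∀ᶠ g' in 𝓝 g, ∀ j ∈ N, F g' (g' j) < 0 :=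
    (eventually_all_finset N).2 fun j hj => (hlim j).eventually_lt_const (hφ.2.2 j hj)
  filter_upwards [hpos, hneg] with g' hpos' hneg'
  exact ⟨F g', fun k hk => cramerCorrection_apply_self ψ φ _ ⟨k, hk⟩, hpos', hneg'⟩

end Normed

/-- the set of configurations of ray generators realizing a fixed
simplicial fan combinatorics `D` (each cone simplicial — hence strongly convex — and
cones intersecting along the cones given by the poset `D`) is open in `(ℝ^d)^m`;
equivalently, sufficiently small perturbations of the generators do not change the
combinatorial type. -/
theorem stmt17 (d m : ℕ) (D : Finset (Finset (Fin m))) :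
    IsOpen {g : Fin m → (Fin d → ℝ) |
      (∀ s ∈ D, LinearIndependent ℝ (fun i : (s : Finset (Fin m)) => g i)) ∧
      (∀ s ∈ D, ∀ t ∈ D, s ∩ t ∈ D ∧
        coneOf (fun i : ((s ∩ t : Finset (Fin m)) : Finset (Fin m)) => g i) =
          coneOf (fun i : (s : Finset (Fin m)) => g i) ∩
            coneOf (fun i : (t : Finset (Fin m)) => g i))} := by
  rw [isOpen_iff_mem_nhds]
  rintro g ⟨hli, hD⟩
  have hli_eventually : ∀ s ∈ D, ∀ᶠ g' in 𝓝 g, LinearIndependent ℝ (fun i : s => g' i) :=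
    fun s hs =>
      (continuous_pi fun i : s => continuous_apply (i : Fin m)).continuousAt.eventually
        (hli s hs).eventually
  have hsep_eventually : ∀ s ∈ D, ∀ t ∈ D, ∀ᶠ g' in 𝓝 g,
      ∃ φ, IsSeparatingFunctional φ g' (s ∩ t) (s \ t) (t \ s) := by
    intro s hs t ht
    obtain ⟨φ, hφ⟩ :=
      exists_isSeparatingFunctional_of_coneOf_inter_eq (hli s hs) (hli t ht) (hD s hs t ht).2
    exact hφ.eventually (LinearIndepOn.mono (hli s hs) (coe_subset.2 inter_subset_left))
  filter_upwards [(eventually_all_finset D).2 hli_eventually,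
    (eventually_all_finset D).2 fun s hs => (eventually_all_finset D).2 (hsep_eventually s hs)]
    with g' hli_near hsep_near
  refine ⟨hli_near, fun s hs t ht => ⟨(hD s hs t ht).1, ?_⟩⟩
  obtain ⟨φ, hφ⟩ := hsep_near s hs t ht
  exact coneOf_inter_eq_of_isSeparatingFunctional hφ
end
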